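/- arXiv:0809.3846 — 5 statements merged into one kernel-verified Lean document; each statement's English description precedes it below -/
import Mathlib

section
/- Let g : ℝ³ → ℝ be defined near the origin by g(h₁,h₂,h₃) = arccos( ((1+h₁)² + (1+h₂)² − (1+h₃)²) / (2(1+h₁)(1+h₂)) ) (the angle opposite the side of length 1+h₃ in a triangle with sides 1+h₁, 1+h₂, 1+h₃). Then g is differentiable at 0, g(0) = π/3, and its derivative at 0 is the linear map h ↦ (√3/3)(2h₃ − h₁ − h₂). Consequently, the total angle function Φ(κ) = Σ_{i=1}^{6} g(κ_{a_i}, κ_{a_{i+1}}, κ_{b_i}) (indices taken mod 6, with a₇ = a₁), defined for κ = (κ_{a_1},…,κ_{a_6}, κ_{b_1},…,κ_{b_6}) ∈ ℝ¹² near 0, satisfies Φ(0) = 2π and has derivative at 0 equal to κ ↦ (2√3/3)(Σ_{i=1}^{6} κ_{b_i} − Σ_{i=1}^{6} κ_{a_i}); in particular, the first-order variation of the angle sum vanishes exactly when Σ_{i=1}^{6} κ_{a_i} = Σ_{i=1}^{6} κ_{b_i} (the linearized compatibility condition). -/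
/-!
At the origin the triangle is equilateral: the cosine ratio equals `1/2` and has gradient
`(1/2, 1/2, -1)`, and `arccos' (1/2) = -2/√3`, so the angle has value `π/3` and gradient
`(√3/3) (-1, -1, 2)`. In the total angle every spoke `a_i` lies in exactly two triangles
(`i ↦ i + 1` permutes `Fin 6`), so the six gradients add up to `(2√3/3) (Σ κ_b - Σ κ_a)`.
-/

open scoped BigOperators

/-- The angle (law of cosines) opposite the side of length `1 + h₃` in a triangle with side
lengths `1 + h₁`, `1 + h₂`, `1 + h₃`, as a function of `h = (h₁, h₂, h₃) ∈ ℝ³`. -/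
noncomputable def angleFun (h : ℝ × ℝ × ℝ) : ℝ :=
  Real.arccos
    (((1 + h.1) ^ 2 + (1 + h.2.1) ^ 2 - (1 + h.2.2) ^ 2) / (2 * (1 + h.1) * (1 + h.2.1)))

/-- The total angle at a node: `κ = (κ_a, κ_b) ∈ ℝ⁶ × ℝ⁶` lists the elongations of the six
spokes `a₁,…,a₆` and the six rim rods `b₁,…,b₆`; the `i`-th triangle has sides
`1 + κ_a i`, `1 + κ_a (i+1)` and `1 + κ_b i` (indices mod 6, so `a₇ = a₁`). -/
noncomputable def totalAngle (κ : (Fin 6 → ℝ) × (Fin 6 → ℝ)) : ℝ :=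
  ∑ i : Fin 6, angleFun (κ.1 i, κ.1 (i + 1), κ.2 i)

open ContinuousLinearMap Real

noncomputable def coordForm (u v w : ℝ) : ℝ × ℝ × ℝ →L[ℝ] ℝ :=
  u • fst ℝ ℝ (ℝ × ℝ) + v • (fst ℝ ℝ ℝ).comp (snd ℝ ℝ (ℝ × ℝ)) +
    w • (snd ℝ ℝ ℝ).comp (snd ℝ ℝ (ℝ × ℝ))

@[simp]
lemma coordForm_apply (u v w : ℝ) (h : ℝ × ℝ × ℝ) :
    coordForm u v w h = u * h.1 + v * h.2.1 + w * h.2.2 := rfl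

noncomputable def cosAngle (h : ℝ × ℝ × ℝ) : ℝ :=
  ((1 + h.1) ^ 2 + (1 + h.2.1) ^ 2 - (1 + h.2.2) ^ 2) / (2 * (1 + h.1) * (1 + h.2.1))

lemma angleFun_eq_arccos_comp : angleFun = arccos ∘ cosAngle := rfl

lemma cosAngle_zero : cosAngle 0 = 1 / 2 := by norm_num [cosAngle]

lemma hasFDerivAt_cosAngle : HasFDerivAt cosAngle (coordForm (1 / 2) (1 / 2) (-1)) 0 := by
  have h₁ : HasFDerivAt (fun h : ℝ × ℝ × ℝ => 1 + h.1) (coordForm 1 0 0) 0 :=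
    (hasFDerivAt_fst.const_add 1).congr_fderiv (by ext <;> simp)
  have h₂ : HasFDerivAt (fun h : ℝ × ℝ × ℝ => 1 + h.2.1) (coordForm 0 1 0) 0 :=
    ((hasFDerivAt_fst.comp 0 hasFDerivAt_snd).const_add 1).congr_fderiv (by ext <;> simp)
  have h₃ : HasFDerivAt (fun h : ℝ × ℝ × ℝ => 1 + h.2.2) (coordForm 0 0 1) 0 :=
    ((hasFDerivAt_snd.comp 0 hasFDerivAt_snd).const_add 1).congr_fderiv (by ext <;> simp)
  have hden : 2 * (1 + (0 : ℝ × ℝ × ℝ).1) * (1 + (0 : ℝ × ℝ × ℝ).2.1) ≠ 0 := by norm_num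
  have hquot := (((h₁.pow 2).add (h₂.pow 2)).sub (h₃.pow 2)).mul
    ((hasDerivAt_inv hden).comp_hasFDerivAt 0 ((h₁.const_mul 2).mul h₂))
  refine (hquot.congr_fderiv ?_).congr_of_eventuallyEq (.of_forall fun h => ?_)
  · ext <;> norm_num
  · simp [cosAngle, div_eq_mul_inv]

lemma hasDerivAt_arccos_one_half : HasDerivAt arccos (-(2 * √3 / 3)) (1 / 2) := by
  have hsqrt : √(1 - (1 / 2 : ℝ) ^ 2) = √3 / 2 := by
    rw [show (1 - (1 / 2 : ℝ) ^ 2) = 3 / 2 ^ 2 by norm_num, sqrt_div' _ (by norm_num),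
      sqrt_sq (by norm_num)]
  have h3 : √3 * √3 = 3 := mul_self_sqrt (by norm_num)
  convert hasDerivAt_arccos (x := 1 / 2) (by norm_num) (by norm_num) using 1
  rw [hsqrt]
  field_simp
  linarith

lemma angleFun_zero : angleFun 0 = π / 3 := by
  rw [angleFun_eq_arccos_comp, Function.comp_apply, cosAngle_zero, ← cos_pi_div_three,
    arccos_cos (by positivity) (by linarith [pi_pos])]

lemma hasFDerivAt_angleFun :
    HasFDerivAt angleFun (coordForm (-(√3 / 3)) (-(√3 / 3)) (2 * √3 / 3)) 0 := by
  rw [angleFun_eq_arccos_comp]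
  refine ((cosAngle_zero ▸ hasDerivAt_arccos_one_half).comp_hasFDerivAt 0
    hasFDerivAt_cosAngle).congr_fderiv ?_
  ext <;> norm_num <;> ring

section CyclicSum

variable {n : ℕ} [NeZero n]

noncomputable def cyclicTriple (i : Fin n) : (Fin n → ℝ) × (Fin n → ℝ) →L[ℝ] ℝ × ℝ × ℝ :=
  (proj i ∘L fst ℝ _ _).prod ((proj (i + 1) ∘L fst ℝ _ _).prod (proj i ∘L snd ℝ _ _))

@[simp]
lemma cyclicTriple_apply (i : Fin n) (κ : (Fin n → ℝ) × (Fin n → ℝ)) :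
    cyclicTriple i κ = (κ.1 i, κ.1 (i + 1), κ.2 i) := rfl

lemma sum_coordForm_comp_cyclicTriple_apply (u v w : ℝ) (κ : (Fin n → ℝ) × (Fin n → ℝ)) :
    (∑ i, (coordForm u v w).comp (cyclicTriple i)) κ =
      (u + v) * ∑ i, κ.1 i + w * ∑ i, κ.2 i := by
  have hshift : ∑ i, κ.1 (i + 1) = ∑ i, κ.1 i := Equiv.sum_comp (Equiv.addRight 1) κ.1
  simp only [sum_apply, comp_apply, cyclicTriple_apply, coordForm_apply, Finset.sum_add_distrib,
    ← Finset.mul_sum, hshift]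
  ring

lemma hasFDerivAt_cyclicSum {f : ℝ × ℝ × ℝ → ℝ} {L : ℝ × ℝ × ℝ →L[ℝ] ℝ}
    (hf : HasFDerivAt f L 0) :
    HasFDerivAt (fun κ : (Fin n → ℝ) × (Fin n → ℝ) => ∑ i, f (κ.1 i, κ.1 (i + 1), κ.2 i))
      (∑ i, L.comp (cyclicTriple i)) 0 :=
  HasFDerivAt.fun_sum fun i _ =>
    (map_zero (cyclicTriple i) ▸ hf).comp 0 (cyclicTriple i).hasFDerivAt

end CyclicSum

lemma totalAngle_zero : totalAngle 0 = 2 * π := by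
  simp only [totalAngle, Prod.fst_zero, Prod.snd_zero, Pi.zero_apply, ← Prod.zero_eq_mk,
    angleFun_zero, Finset.sum_const, Finset.card_univ, Fintype.card_fin]
  ring

/-- `angleFun` is differentiable at `0` with value `π/3` and derivative
`h ↦ (√3/3)(2h₃ - h₁ - h₂)`; consequently the total angle `totalAngle` equals `2π` at `0`,
is differentiable at `0` with derivative `κ ↦ (2√3/3)(Σ κ_b - Σ κ_a)`, whose vanishing is
exactly the linearized compatibility condition `Σ κ_a = Σ κ_b`. -/
theorem linearized_compatibility :
    DifferentiableAt ℝ angleFun 0 ∧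
    angleFun 0 = Real.pi / 3 ∧
    (∀ h : ℝ × ℝ × ℝ,
      fderiv ℝ angleFun 0 h = Real.sqrt 3 / 3 * (2 * h.2.2 - h.1 - h.2.1)) ∧
    totalAngle 0 = 2 * Real.pi ∧
    DifferentiableAt ℝ totalAngle 0 ∧
    (∀ κ : (Fin 6 → ℝ) × (Fin 6 → ℝ),
      fderiv ℝ totalAngle 0 κ =
        2 * Real.sqrt 3 / 3 * ((∑ i : Fin 6, κ.2 i) - ∑ i : Fin 6, κ.1 i)) ∧
    (∀ κ : (Fin 6 → ℝ) × (Fin 6 → ℝ),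
      fderiv ℝ totalAngle 0 κ = 0 ↔ (∑ i : Fin 6, κ.1 i) = ∑ i : Fin 6, κ.2 i) := by
  have hTotal : HasFDerivAt totalAngle _ 0 := hasFDerivAt_cyclicSum (n := 6) hasFDerivAt_angleFun
  have hTotal_apply (κ : (Fin 6 → ℝ) × (Fin 6 → ℝ)) : fderiv ℝ totalAngle 0 κ =
      2 * √3 / 3 * ((∑ i : Fin 6, κ.2 i) - ∑ i : Fin 6, κ.1 i) := by
    rw [hTotal.fderiv, sum_coordForm_comp_cyclicTriple_apply]
    ring
  refine ⟨hasFDerivAt_angleFun.differentiableAt, angleFun_zero, fun h => ?_, totalAngle_zero,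
    hTotal.differentiableAt, hTotal_apply, fun κ => ?_⟩
  · rw [hasFDerivAt_angleFun.fderiv, coordForm_apply]
    ring
  · rw [hTotal_apply, mul_eq_zero_iff_left (by positivity), sub_eq_zero, eq_comm]
end

section
/- For every integer n ≥ 2, the hexagonal linear functionals of the hexagonal array of side n are linearly independent: the family of linear maps Z_p : ℝ^E → ℝ indexed by interior nodes p, where Z_p(κ) = (sum of κ over the six spoke edges of p) − (sum of κ over the six rim edges of p) and E is the edge set, is a linearly independent family of functionals. -/
open scoped Classical

/-- The hexagonal array of side `n`: nodes `(i,j) ∈ ℤ²` with `|i| ≤ n-1`, `|j| ≤ n-1`,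
`|i+j| ≤ n-1`. -/
noncomputable def hexNodes (n : ℤ) : Finset (ℤ × ℤ) :=
  (Finset.Icc ((-(n-1), -(n-1)) : ℤ × ℤ) ((n-1, n-1) : ℤ × ℤ)).filter
    (fun p => |p.1 + p.2| ≤ n - 1)

/-- The three lattice directions `(1,0)`, `(0,1)`, `(-1,1)`. -/
def hexDirs : Finset (ℤ × ℤ) := {(1,0), (0,1), (-1,1)}

/-- The edges of the hexagonal array of side `n`: unordered pairs `{p, p+d}` with both
endpoints in `hexNodes n` and `d` one of the three lattice directions. -/
noncomputable def hexEdges (n : ℤ) : Finset (Sym2 (ℤ × ℤ)) :=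
  (((hexNodes n) ×ˢ hexDirs).filter (fun pd => pd.1 + pd.2 ∈ hexNodes n)).image
    (fun pd => s(pd.1, pd.1 + pd.2))

/-- Interior nodes: all six neighbors lie in the array. -/
noncomputable def interiorNodes (n : ℤ) : Finset (ℤ × ℤ) :=
  (hexNodes n).filter (fun p => ∀ d ∈ hexDirs, p + d ∈ hexNodes n ∧ p - d ∈ hexNodes n)

/-- Evaluation of `κ : Edges(H_n) → ℝ` at the unordered pair `e` (zero if `e` is not an
edge), as a linear functional on `ℝ^E`. -/
noncomputable def edgeEval (n : ℤ) (e : Sym2 (ℤ × ℤ)) :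
    ({e : Sym2 (ℤ × ℤ) // e ∈ hexEdges n} → ℝ) →ₗ[ℝ] ℝ where
  toFun κ := if h : e ∈ hexEdges n then κ ⟨e, h⟩ else 0
  map_add' x y := by by_cases h : e ∈ hexEdges n <;> simp [h]
  map_smul' c x := by by_cases h : e ∈ hexEdges n <;> simp [h]

/-- The hexagonal linear functional at a node `p`: sum of `κ` over the six spoke edges of
`p` minus the sum of `κ` over the six rim edges around `p`. -/
noncomputable def Zfun (n : ℤ) (p : ℤ × ℤ) :
    ({e : Sym2 (ℤ × ℤ) // e ∈ hexEdges n} → ℝ) →ₗ[ℝ] ℝ :=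
  (edgeEval n s(p, p + (1,0)) + edgeEval n s(p, p - (1,0)) + edgeEval n s(p, p + (0,1)) +
      edgeEval n s(p, p - (0,1)) + edgeEval n s(p, p + (-1,1)) + edgeEval n s(p, p - (-1,1))) -
  (edgeEval n s(p + (1,0), p + (0,1)) + edgeEval n s(p + (0,1), p + (-1,1)) +
      edgeEval n s(p + (-1,1), p - (1,0)) + edgeEval n s(p - (1,0), p - (0,1)) +
      edgeEval n s(p - (0,1), p + (1,-1)) + edgeEval n s(p + (1,-1), p + (1,0)))

/-! The edge joining an interior node `p` to its left neighbour `p - (1,0)` is a spoke of `p`,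
so `Z_p` takes the value `1` on its indicator. The only other `Z_q` that see this edge have it as
a horizontal spoke or rim edge with right endpoint `p`, which forces `p ∈ {q + (1,0), q + (0,1),
q + (1,-1)}`, so `q` precedes `p` lexicographically. The matrix of the `Z_q` against these
indicators is therefore unitriangular. -/

theorem LinearIndependent.of_dual_triangular {ι κ R M : Type*} [LinearOrder κ] [CommRing R]
    [NoZeroDivisors R] [AddCommGroup M] [Module R M] (v : ι → M) (φ : ι → Module.Dual R M)
    (key : ι → κ) (hkey : Function.Injective key) (h_diag : ∀ i, φ i (v i) ≠ 0)
    (h_tri : ∀ i j, key i < key j → φ i (v j) = 0) :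
    LinearIndependent R v := by
  refine linearIndependent_iff'.mpr fun s g hrel => ?_
  by_contra! hg
  obtain ⟨i₀, hi₀, hmin⟩ :=
    (s.filter (g · ≠ 0)).exists_min_image key (by simpa [Finset.Nonempty] using hg)
  obtain ⟨hi₀s, hgi₀⟩ := Finset.mem_filter.1 hi₀
  have hvanish : ∀ j ∈ s, j ≠ i₀ → g j * φ i₀ (v j) = 0 := by
    intro j hj hji
    by_cases hgj : g j = 0
    · rw [hgj, zero_mul]
    · have hlt := (hmin j (Finset.mem_filter.2 ⟨hj, hgj⟩)).lt_of_ne (hkey.ne hji.symm)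
      rw [h_tri _ _ hlt, mul_zero]
  have hdiag_zero : g i₀ * φ i₀ (v i₀) = 0 := by
    simpa [Finset.sum_eq_single_of_mem i₀ hi₀s hvanish] using congr_arg (φ i₀) hrel
  exact mul_ne_zero hgi₀ (h_diag i₀) hdiag_zero

def leftEdge (p : ℤ × ℤ) : Sym2 (ℤ × ℤ) := s(p - (1, 0), p)

noncomputable def edgeIndicator (n : ℤ) (e : Sym2 (ℤ × ℤ)) :
    {f : Sym2 (ℤ × ℤ) // f ∈ hexEdges n} → ℝ :=
  fun f => if f.1 = e then 1 else 0

theorem edgeEval_edgeIndicator_of_ne {n : ℤ} {e f : Sym2 (ℤ × ℤ)} (h : f ≠ e) :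
    edgeEval n f (edgeIndicator n e) = 0 := by
  simp [edgeEval, edgeIndicator, h]

theorem edgeEval_edgeIndicator_self {n : ℤ} {e : Sym2 (ℤ × ℤ)} (he : e ∈ hexEdges n) :
    edgeEval n e (edgeIndicator n e) = 1 := by
  simp [edgeEval, edgeIndicator, he]

theorem leftEdge_mem_hexEdges {n : ℤ} {p : ℤ × ℤ} (hp : p ∈ interiorNodes n) :
    leftEdge p ∈ hexEdges n := by
  have hdir : ((1, 0) : ℤ × ℤ) ∈ hexDirs := by simp [hexDirs]
  obtain ⟨hp, hnbr⟩ := Finset.mem_filter.1 hp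
  exact Finset.mem_image.2
    ⟨(p - (1, 0), (1, 0)), by simp [hdir, hp, (hnbr _ hdir).2], by simp [leftEdge]⟩

theorem Zfun_edgeIndicator_leftEdge_self {n : ℤ} {p : ℤ × ℤ} (hp : p ∈ interiorNodes n) :
    Zfun n p (edgeIndicator n (leftEdge p)) = 1 := by
  have hspoke : s(p, p - (1, 0)) = leftEdge p := Sym2.eq_swap
  simp only [Zfun, LinearMap.sub_apply, LinearMap.add_apply, hspoke,
    edgeEval_edgeIndicator_self (leftEdge_mem_hexEdges hp)]
  simp (disch := simp only [ne_eq, leftEdge, Sym2.eq_iff, Prod.ext_iff, Prod.fst_add,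
    Prod.snd_add, Prod.fst_sub, Prod.snd_sub]; omega) only [edgeEval_edgeIndicator_of_ne]
  norm_num

theorem Zfun_edgeIndicator_leftEdge_of_lt {n : ℤ} {p q : ℤ × ℤ} (hpq : toLex p < toLex q) :
    Zfun n q (edgeIndicator n (leftEdge p)) = 0 := by
  rw [Prod.Lex.toLex_lt_toLex] at hpq
  simp only [Zfun, LinearMap.sub_apply, LinearMap.add_apply]
  simp (disch := simp only [ne_eq, leftEdge, Sym2.eq_iff, Prod.ext_iff, Prod.fst_add,
    Prod.snd_add, Prod.fst_sub, Prod.snd_sub]; omega) only [edgeEval_edgeIndicator_of_ne]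
  norm_num

theorem hexagonal_functionals_linearIndependent_general (n : ℤ) :
    LinearIndependent ℝ (fun p : {p : ℤ × ℤ // p ∈ interiorNodes n} => Zfun n p.1) :=
  .of_dual_triangular _ (fun p => Module.Dual.eval ℝ _ (edgeIndicator n (leftEdge p.1)))
    (fun p => toLex p.1) (toLex.injective.comp Subtype.val_injective)
    (fun p => by simp [Zfun_edgeIndicator_leftEdge_self p.2])
    (fun _ _ hpq => Zfun_edgeIndicator_leftEdge_of_lt hpq)

/-- for `n ≥ 2`, the family of hexagonal linear functionals `Z_p : ℝ^E → ℝ`,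
indexed by the interior nodes `p` of the hexagonal array of side `n`, is linearly
independent. -/
theorem hexagonal_functionals_linearIndependent (n : ℤ) (hn : 2 ≤ n) :
    LinearIndependent ℝ (fun p : {p : ℤ × ℤ // p ∈ interiorNodes n} => Zfun n p.1) :=
  hexagonal_functionals_linearIndependent_general n
end

section
/- For every integer n ≥ 2, the set of all κ ∈ ℝ^E satisfying the hexagonal equation at every interior node of the hexagonal array of side n is a linear subspace of ℝ^E of dimension E(n) − M(n) = (9n² − 15n + 6) − (3n² − 9n + 7) = 6n² − 6n − 1 = 2N(n) − 3, where E(n), M(n), N(n) are the numbers of edges, interior nodes, and nodes respectively. -/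
open scoped Classical

/-! The equations `Z_p`, `p` interior, are linearly independent: the vertical edge
`{q, q + (0,1)}` occurs in `Z_q` with coefficient `1` and otherwise only in `Z_p` for
`p ∈ {q + (0,1), q + (1,0), q + (-1,1)}`, all later than `q` in the lexicographic order on
`(j, i)`. Hence the equation map `ℝ^E → ℝ^M` is onto and its kernel has dimension `E - M`.

The counts are column sums: column `i` of `H_n` has `2n - 1 - |i|` nodes, so `N = 3n² - 3n + 1`;
the interior nodes form `H_{n-1}`; and the three edge directions are exchanged by symmetries of
the array, each direction contributing `N - (2n - 1)` edges. -/

open Finset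

lemma sum_Icc_abs {m : ℤ} (hm : 0 ≤ m) : ∑ i ∈ Icc (-m) m, |i| = m * (m + 1) := by
  induction m, hm using Int.leInduction with
  | base => simp
  | succ m hm ih =>
    have hsplit : Icc (-(m + 1)) (m + 1) = insert (-(m + 1)) (insert (m + 1) (Icc (-m) m)) := by
      ext i; simp only [mem_Icc, mem_insert]; omega
    rw [hsplit, sum_insert (by simp; omega), sum_insert (by simp), ih,
      abs_of_neg (by omega), abs_of_pos (by omega)]
    ring

lemma card_filter_add_map_mem {G : Type*} [Add G] [DecidableEq G] (σ : G ≃+ G) {s : Finset G}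
    (hs : ∀ p, σ p ∈ s ↔ p ∈ s) (d : G) :
    #{p ∈ s | p + σ d ∈ s} = #{p ∈ s | p + d ∈ s} :=
  (card_equiv σ.toEquiv fun p => by simp [← map_add, hs]).symm

lemma card_image_sym2_mk_add {G : Type*} [AddGroup G] [DecidableEq G] (s D : Finset G)
    (hD : ∀ d ∈ D, ∀ d' ∈ D, d + d' ≠ 0) :
    #({pd ∈ s ×ˢ D | pd.1 + pd.2 ∈ s}.image fun pd => s(pd.1, pd.1 + pd.2)) =
      ∑ d ∈ D, #{p ∈ s | p + d ∈ s} := by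
  rw [card_image_of_injOn, card_filter, sum_product, sum_comm]
  · simp only [card_filter]
  rintro ⟨p, d⟩ hpd ⟨p', d'⟩ hpd' h
  simp only [coe_filter, mem_product, Set.mem_ofPred_eq] at hpd hpd'
  rcases Sym2.eq_iff.mp h with ⟨rfl, h⟩ | ⟨rfl, h⟩
  · simpa using h
  · exact absurd (by simpa [add_assoc] using h) (hD d' hpd'.1.2 d hpd.1.2)

theorem LinearMap.surjective_of_triangular {K V ι α : Type*} [Field K] [AddCommGroup V]
    [Module K V] [Fintype ι] [LinearOrder α] (L : V →ₗ[K] ι → K) (v : ι → V) (key : ι → α)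
    (hdiag : ∀ q, L (v q) q ≠ 0) (htri : ∀ p q, p ≠ q → key p ≤ key q → L (v q) p = 0) :
    Function.Surjective L := by
  set T := L ∘ₗ Fintype.linearCombination K v
  have hT : ∀ c p, T c p = ∑ q, c q * L (v q) p := fun c p => by
    simp [T, Fintype.linearCombination_apply, map_sum, map_smul]
  suffices Function.Injective T from
    Function.Surjective.of_comp (LinearMap.injective_iff_surjective.mp this)
  rw [← LinearMap.ker_eq_bot, LinearMap.ker_eq_bot']
  by_contra! ⟨c, hc, hne⟩
  obtain ⟨p, hp, hmin⟩ := exists_min_image {q | c q ≠ 0} key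
    (by simpa [Finset.Nonempty, Function.ne_iff] using hne)
  have hcp : c p ≠ 0 := (mem_filter.mp hp).2
  have : T c p = c p * L (v p) p := by
    rw [hT]
    refine sum_eq_single p (fun q _ hqp => ?_) (by simp)
    by_cases hcq : c q = 0
    · rw [hcq, zero_mul]
    · rw [htri p q (Ne.symm hqp) (hmin q (by simpa using hcq)), mul_zero]
  rw [hc] at this
  exact mul_ne_zero hcp (hdiag p) this.symm

lemma mem_hexNodes {n : ℤ} {p : ℤ × ℤ} :
    p ∈ hexNodes n ↔ |p.1| ≤ n - 1 ∧ |p.2| ≤ n - 1 ∧ |p.1 + p.2| ≤ n - 1 := by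
  simp only [hexNodes, mem_filter, mem_Icc, Prod.le_def, abs_le]
  omega

lemma card_filter_add_mem_hexNodes {n t : ℤ} (hn : 1 ≤ n) (ht : 0 ≤ t) (htn : t ≤ n) :
    (#{p ∈ hexNodes n | p + (0, t) ∈ hexNodes n} : ℤ) =
      (2 * n - 1) * (2 * n - 1 - t) - n * (n - 1) := by
  set s := {p ∈ hexNodes n | p + (0, t) ∈ hexNodes n}
  have hcol : ∀ i ∈ Icc (-(n - 1)) (n - 1),
      (#{p ∈ s | p.1 = i} : ℤ) = (2 * n - 1 - t) - |i| := by
    intro i hi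
    rw [mem_Icc] at hi
    have hfib : {p ∈ s | p.1 = i} =
        (Icc (-(n - 1) - min i 0) (n - 1 - t - max i 0)).map (Function.Embedding.sectR i ℤ) := by
      ext ⟨a, b⟩
      simp only [s, mem_filter, mem_hexNodes, mem_map, mem_Icc, Function.Embedding.sectR_apply,
        Prod.mk_add_mk, Prod.mk.injEq, abs_le, add_zero, exists_eq_right_right]
      omega
    rw [hfib, card_map, Int.card_Icc, abs_eq_max_neg]
    omega
  have hmaps : (s : Set (ℤ × ℤ)).MapsTo Prod.fst (Icc (-(n - 1)) (n - 1)) := by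
    intro p hp
    simp only [s, coe_filter, Set.mem_ofPred_eq, mem_hexNodes, abs_le] at hp
    simp only [coe_Icc, Set.mem_Icc]
    omega
  rw [card_eq_sum_card_fiberwise hmaps, Nat.cast_sum, sum_congr rfl hcol, sum_sub_distrib,
    sum_const, Int.card_Icc, sum_Icc_abs (by omega), nsmul_eq_mul,
    Int.natCast_toNat_eq_self.mpr (by omega)]
  ring

-- Exchanges the coordinates `i` and `-(i + j)`, which enter `hexNodes` symmetrically.
def hexReflect : ℤ × ℤ ≃+ ℤ × ℤ where
  toFun p := (-p.1 - p.2, p.2)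
  invFun p := (-p.1 - p.2, p.2)
  left_inv p := by ext <;> simp
  right_inv p := by ext <;> simp
  map_add' p q := Prod.ext (by simp only [Prod.fst_add, Prod.snd_add]; ring) rfl

lemma card_filter_add_mem_hexNodes_of_mem_hexDirs {n : ℤ} {d : ℤ × ℤ} (hd : d ∈ hexDirs) :
    #{p ∈ hexNodes n | p + d ∈ hexNodes n} = #{p ∈ hexNodes n | p + (0, 1) ∈ hexNodes n} := by
  simp only [hexDirs, mem_insert, mem_singleton] at hd
  rcases hd with rfl | rfl | rfl
  · exact card_filter_add_map_mem (AddEquiv.prodComm : ℤ × ℤ ≃+ ℤ × ℤ) (s := hexNodes n)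
      (fun p => by
        simp only [AddEquiv.coe_prodComm, Prod.fst_swap, Prod.snd_swap, mem_hexNodes, add_comm]
        tauto) (0, 1)
  · rfl
  · exact card_filter_add_map_mem hexReflect (s := hexNodes n)
      (fun p => by
        simp only [hexReflect, AddEquiv.coe_mk, Equiv.coe_fn_mk, mem_hexNodes, abs_le]
        omega) (0, 1)


lemma card_hexNodes {n : ℤ} (hn : 1 ≤ n) : (#(hexNodes n) : ℤ) = 3 * n ^ 2 - 3 * n + 1 := by
  have := card_filter_add_mem_hexNodes hn le_rfl (by omega : (0 : ℤ) ≤ n)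
  rw [Prod.mk_zero_zero, filter_true_of_mem fun p hp => by rwa [add_zero]] at this
  linear_combination this

lemma card_hexEdges {n : ℤ} (hn : 1 ≤ n) : (#(hexEdges n) : ℤ) = 9 * n ^ 2 - 15 * n + 6 := by
  have hD : ∀ d ∈ hexDirs, ∀ d' ∈ hexDirs, d + d' ≠ 0 := by decide
  rw [hexEdges, card_image_sym2_mk_add _ _ hD,
    sum_congr rfl fun d hd => card_filter_add_mem_hexNodes_of_mem_hexDirs hd, sum_const,
    show #hexDirs = 3 from rfl, smul_eq_mul, Nat.cast_mul,
    card_filter_add_mem_hexNodes hn zero_le_one (by omega)]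
  ring

lemma interiorNodes_eq (n : ℤ) : interiorNodes n = hexNodes (n - 1) := by
  ext p
  simp only [interiorNodes, hexDirs, mem_filter, mem_insert, mem_singleton, forall_eq_or_imp,
    forall_eq, mem_hexNodes, Prod.fst_add, Prod.snd_add, Prod.fst_sub, Prod.snd_sub, abs_le]
  omega

lemma edgeEval_single {n : ℤ} (e' : Sym2 (ℤ × ℤ)) {e : Sym2 (ℤ × ℤ)} (he : e ∈ hexEdges n) :
    edgeEval n e' (Pi.single ⟨e, he⟩ 1) = if e' = e then 1 else 0 := by
  by_cases h : e' = e
  · subst h; simp [edgeEval, he]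
  · simp [edgeEval, h]

lemma Zfun_single_self {n : ℤ} (q : ℤ × ℤ) (he : s(q, q + (0, 1)) ∈ hexEdges n) :
    Zfun n q (Pi.single ⟨s(q, q + (0, 1)), he⟩ 1) = 1 := by
  obtain ⟨a, b⟩ := q
  simp only [Zfun, LinearMap.sub_apply, LinearMap.add_apply, edgeEval_single, Sym2.eq_iff,
    Prod.mk_add_mk, Prod.mk_sub_mk, Prod.mk.injEq]
  simp (disch := omega) only [if_neg]
  norm_num

lemma Zfun_single_eq_zero {n : ℤ} {p q : ℤ × ℤ} (he : s(q, q + (0, 1)) ∈ hexEdges n)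
    (h₀ : p ≠ q) (h₁ : p ≠ q + (0, 1)) (h₂ : p ≠ q + (1, 0)) (h₃ : p ≠ q + (-1, 1)) :
    Zfun n p (Pi.single ⟨s(q, q + (0, 1)), he⟩ 1) = 0 := by
  obtain ⟨a, b⟩ := p
  obtain ⟨c, d⟩ := q
  simp only [ne_eq, Prod.mk_add_mk, Prod.mk.injEq] at h₀ h₁ h₂ h₃
  simp only [Zfun, LinearMap.sub_apply, LinearMap.add_apply, edgeEval_single, Sym2.eq_iff,
    Prod.mk_add_mk, Prod.mk_sub_mk, Prod.mk.injEq]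
  simp (disch := omega) only [if_neg]
  norm_num

lemma mk_mem_hexEdges {n : ℤ} {p d : ℤ × ℤ} (hp : p ∈ hexNodes n) (hpd : p + d ∈ hexNodes n)
    (hd : d ∈ hexDirs) : s(p, p + d) ∈ hexEdges n :=
  mem_image.mpr ⟨(p, d), mem_filter.mpr ⟨mem_product.mpr ⟨hp, hd⟩, hpd⟩, rfl⟩

lemma mk_add_mem_hexEdges_of_mem_interiorNodes {n : ℤ} {q : ℤ × ℤ} (hq : q ∈ interiorNodes n) :
    s(q, q + (0, 1)) ∈ hexEdges n := by
  have hd : ((0, 1) : ℤ × ℤ) ∈ hexDirs := by decide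
  obtain ⟨hq, hnb⟩ := mem_filter.mp hq
  exact mk_mem_hexEdges hq (hnb _ hd).1 hd

noncomputable def hexEquations (n : ℤ) :
    ({e : Sym2 (ℤ × ℤ) // e ∈ hexEdges n} → ℝ) →ₗ[ℝ] ({p : ℤ × ℤ // p ∈ interiorNodes n} → ℝ) :=
  LinearMap.pi fun p => Zfun n p

lemma mem_ker_hexEquations {n : ℤ} {κ : {e : Sym2 (ℤ × ℤ) // e ∈ hexEdges n} → ℝ} :
    κ ∈ LinearMap.ker (hexEquations n) ↔ ∀ p ∈ interiorNodes n, Zfun n p κ = 0 := by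
  simp [hexEquations, funext_iff]

lemma hexEquations_surjective (n : ℤ) : Function.Surjective (hexEquations n) := by
  refine LinearMap.surjective_of_triangular _
    (fun q => Pi.single ⟨_, mk_add_mem_hexEdges_of_mem_interiorNodes q.2⟩ 1)
    (fun q => toLex q.1.swap) (fun q => ?_) (fun p q hpq hkey => ?_)
  · simpa [hexEquations] using (Zfun_single_self q.1 _).trans_ne one_ne_zero
  · obtain ⟨⟨a, b⟩, hp⟩ := p
    obtain ⟨⟨c, d⟩, hq⟩ := q
    simp only [ne_eq, Subtype.mk.injEq, Prod.mk.injEq, Prod.swap_prod_mk,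
      Prod.Lex.toLex_le_toLex] at hpq hkey
    simp only [hexEquations, LinearMap.pi_apply]
    apply Zfun_single_eq_zero <;> simp only [ne_eq, Prod.mk_add_mk, Prod.mk.injEq] <;> omega

lemma finrank_ker_hexEquations (n : ℤ) :
    (Module.finrank ℝ (LinearMap.ker (hexEquations n)) : ℤ) =
      #(hexEdges n) - #(interiorNodes n) := by
  have := LinearMap.finrank_range_add_finrank_ker (hexEquations n)
  rw [LinearMap.range_eq_top.mpr (hexEquations_surjective n), finrank_top,
    Module.finrank_fintype_fun_eq_card, Module.finrank_fintype_fun_eq_card, Fintype.card_coe,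
    Fintype.card_coe] at this
  omega

/-- for `n ≥ 2`, the set of all `κ ∈ ℝ^E` satisfying the hexagonal equation at
every interior node (i.e. `Z_p κ = 0` for all interior `p`) is a linear subspace of `ℝ^E` of
dimension `E(n) - M(n) = (9n² - 15n + 6) - (3n² - 9n + 7) = 6n² - 6n - 1 = 2N(n) - 3`. -/
theorem hexagonal_solution_space_dim (n : ℤ) (hn : 2 ≤ n) :
    ∃ V : Submodule ℝ ({e : Sym2 (ℤ × ℤ) // e ∈ hexEdges n} → ℝ),
      (∀ κ, κ ∈ V ↔ ∀ p ∈ interiorNodes n, Zfun n p κ = 0) ∧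
      (Module.finrank ℝ V : ℤ) = ((hexEdges n).card : ℤ) - ((interiorNodes n).card : ℤ) ∧
      (Module.finrank ℝ V : ℤ) = (9 * n ^ 2 - 15 * n + 6) - (3 * n ^ 2 - 9 * n + 7) ∧
      (Module.finrank ℝ V : ℤ) = 6 * n ^ 2 - 6 * n - 1 ∧
      (Module.finrank ℝ V : ℤ) = 2 * ((hexNodes n).card : ℤ) - 3 := by
  have hdim := finrank_ker_hexEquations n
  have hE := card_hexEdges (n := n) (by omega)
  have hM : (#(interiorNodes n) : ℤ) = 3 * n ^ 2 - 9 * n + 7 := by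
    rw [interiorNodes_eq, card_hexNodes (by omega)]; ring
  have hN := card_hexNodes (n := n) (by omega)
  exact ⟨_, fun κ => mem_ker_hexEquations, hdim, by linarith, by linarith, by linarith⟩
end

section
/- Fix s > 0 and an integer n ≥ 2. For every i₀ ∈ ℤ, the stripe elongation vector κ defined by κ(e) = s if e is an edge of the form {(i₀, j), (i₀+1, j)} (an edge parallel to direction 1) with both endpoints in H_n, and κ(e) = 0 for all other edges, is a still state of the hexagonal array of side n: it takes values in {0, s} and satisfies the hexagonal equation at every interior node. -/
/-!
Around a node `p = (a, b)` only four of the twelve edges are parallel to direction 1: the spokes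
`{p - (1,0), p}`, `{p, p + (1,0)}` and the rim edges `{p + (-1,1), p + (0,1)}`,
`{p - (0,1), p + (1,-1)}`, whose left endpoints lie in the columns `a - 1`, `a`, `a - 1`, `a`.
Hence for the stripe on all of `ℤ²` both sides of the hexagonal equation equal
`σ ([a - 1 = i₀] + [a = i₀])`. At an interior node all twelve edges have both endpoints in the
array, where the truncated stripe agrees with the unrestricted one.
-/

open scoped Classical

/-- The hexagonal equation for `κ` at a node `p`: the sum of `κ` over the six spoke edges of
`p` equals the sum of `κ` over the six rim edges around `p`. -/
def hexEq (κ : Sym2 (ℤ × ℤ) → ℝ) (p : ℤ × ℤ) : Prop :=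
  κ s(p, p + (1,0)) + κ s(p, p - (1,0)) + κ s(p, p + (0,1)) + κ s(p, p - (0,1)) +
    κ s(p, p + (-1,1)) + κ s(p, p - (-1,1)) =
  κ s(p + (1,0), p + (0,1)) + κ s(p + (0,1), p + (-1,1)) + κ s(p + (-1,1), p - (1,0)) +
    κ s(p - (1,0), p - (0,1)) + κ s(p - (0,1), p + (1,-1)) + κ s(p + (1,-1), p + (1,0))

/-- A still state with critical elongation `σ`: every edge elongation is `0` or `σ` and the
hexagonal equation holds at every interior node. -/
def StillState (n : ℤ) (σ : ℝ) (κ : Sym2 (ℤ × ℤ) → ℝ) : Prop :=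
  (∀ e ∈ hexEdges n, κ e = 0 ∨ κ e = σ) ∧ ∀ p ∈ interiorNodes n, hexEq κ p

theorem hexEq_congr {κ κ' : Sym2 (ℤ × ℤ) → ℝ} {n : ℤ} {p : ℤ × ℤ} (hp : p ∈ interiorNodes n)
    (h : ∀ q ∈ hexNodes n, ∀ r ∈ hexNodes n, κ s(q, r) = κ' s(q, r)) :
    hexEq κ p ↔ hexEq κ' p := by
  obtain ⟨hp, hnb⟩ := Finset.mem_filter.1 hp
  obtain ⟨h₁, h₄⟩ := hnb (1, 0) (by simp [hexDirs])
  obtain ⟨h₂, h₅⟩ := hnb (0, 1) (by simp [hexDirs])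
  obtain ⟨h₃, h₆⟩ := hnb (-1, 1) (by simp [hexDirs])
  have h₆' : p + (1, -1) ∈ hexNodes n := by
    convert h₆ using 1
    simp [sub_eq_add_neg]
  simp only [hexEq, h _ hp _ h₁, h _ hp _ h₂, h _ hp _ h₃, h _ hp _ h₄, h _ hp _ h₅,
    h _ hp _ h₆, h _ h₁ _ h₂, h _ h₂ _ h₃, h _ h₃ _ h₄, h _ h₄ _ h₅, h _ h₅ _ h₆', h _ h₆' _ h₁]

noncomputable def stripe (σ : ℝ) (i₀ : ℤ) (e : Sym2 (ℤ × ℤ)) : ℝ :=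
  if ∃ j : ℤ, e = s((i₀, j), (i₀ + 1, j)) then σ else 0

section stripe

variable {σ : ℝ} {i₀ x₁ x₂ y₁ y₂ : ℤ}

theorem stripe_eq_zero_of_snd_ne (h : x₂ ≠ y₂) : stripe σ i₀ s((x₁, x₂), (y₁, y₂)) = 0 := by
  rw [stripe, if_neg]
  rintro ⟨j, hj⟩
  simp only [Sym2.eq_iff, Prod.mk.injEq] at hj
  omega

theorem stripe_of_eq_add_one (h₁ : y₁ = x₁ + 1) (h₂ : y₂ = x₂) :
    stripe σ i₀ s((x₁, x₂), (y₁, y₂)) = if x₁ = i₀ then σ else 0 := by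
  subst y₁ y₂
  simp only [stripe, Sym2.eq_iff, Prod.mk.injEq]
  congr 1
  apply propext
  constructor
  · rintro ⟨j, h | h⟩ <;> omega
  · rintro rfl
    exact ⟨x₂, Or.inl ⟨⟨rfl, rfl⟩, rfl, rfl⟩⟩

theorem stripe_of_add_one_eq (h₁ : x₁ = y₁ + 1) (h₂ : x₂ = y₂) :
    stripe σ i₀ s((x₁, x₂), (y₁, y₂)) = if y₁ = i₀ then σ else 0 := by
  rw [Sym2.eq_swap, stripe_of_eq_add_one h₁ h₂]

end stripe

theorem hexEq_stripe (σ : ℝ) (i₀ : ℤ) (p : ℤ × ℤ) : hexEq (stripe σ i₀) p := by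
  obtain ⟨a, b⟩ := p
  simp only [hexEq, Prod.mk_add_mk, Prod.mk_sub_mk]
  simp (disch := omega) only [stripe_eq_zero_of_snd_ne, stripe_of_eq_add_one,
    stripe_of_add_one_eq]
  ring_nf

theorem stripe_eq_of_mem {S : Finset (ℤ × ℤ)} {q r : ℤ × ℤ} (hq : q ∈ S) (hr : r ∈ S)
    (σ : ℝ) (i₀ : ℤ) :
    (if ∃ j : ℤ, s(q, r) = s((i₀, j), (i₀ + 1, j)) ∧ (i₀, j) ∈ S ∧ (i₀ + 1, j) ∈ S
      then σ else 0) = stripe σ i₀ s(q, r) := by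
  have mem_S {x y : ℤ × ℤ} (h : s(q, r) = s(x, y)) : x ∈ S ∧ y ∈ S := by
    have hx : x ∈ s(q, r) := h ▸ Sym2.mem_mk_left x y
    have hy : y ∈ s(q, r) := h ▸ Sym2.mem_mk_right x y
    rw [Sym2.mem_iff] at hx hy
    exact ⟨hx.elim (· ▸ hq) (· ▸ hr), hy.elim (· ▸ hq) (· ▸ hr)⟩
  simp only [stripe]
  congr 1
  exact propext <| exists_congr fun j => and_iff_left_of_imp mem_S

theorem stripe_is_still_state_general (σ : ℝ) (n : ℤ) (i₀ : ℤ) :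
    StillState n σ (fun e =>
      if ∃ j : ℤ, e = s(((i₀, j) : ℤ × ℤ), ((i₀ + 1, j) : ℤ × ℤ)) ∧
          ((i₀, j) : ℤ × ℤ) ∈ hexNodes n ∧ ((i₀ + 1, j) : ℤ × ℤ) ∈ hexNodes n
      then σ else 0) := by
  refine ⟨fun e _ => (ite_eq_or_eq _ _ _).symm, fun p hp => ?_⟩
  exact (hexEq_congr hp fun q hq r hr => stripe_eq_of_mem hq hr σ i₀).2 (hexEq_stripe σ i₀ p)

/-- the stripe elongation vector — equal to `σ` on the direction-1 edges
`{(i₀, j), (i₀+1, j)}` (for all `j`) with both endpoints in the array, and `0` on all other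
edges — is a still state of the hexagonal array of side `n ≥ 2`. -/
theorem stripe_is_still_state (σ : ℝ) (hσ : 0 < σ) (n : ℤ) (hn : 2 ≤ n) (i₀ : ℤ) :
    StillState n σ (fun e =>
      if ∃ j : ℤ, e = s(((i₀, j) : ℤ × ℤ), ((i₀ + 1, j) : ℤ × ℤ)) ∧
          ((i₀, j) : ℤ × ℤ) ∈ hexNodes n ∧ ((i₀ + 1, j) : ℤ × ℤ) ∈ hexNodes n
      then σ else 0) :=
  stripe_is_still_state_general σ n i₀
end

section
/- Fix s > 0. For every integer n ≥ 3 and every triple (α₁, α₂, α₃) ∈ [0,1]³ there exists a still state κ of the hexagonal array of side n whose concentrations α*_r = (number of long edges parallel to direction r)/(3n² − 5n + 2), r = 1, 2, 3, satisfy |α_r − α*_r| < 1/n for each r ∈ {1,2,3}. -/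
open scoped Classical

/-- The three lattice direction vectors, indexed by `Fin 3`. -/
def dvec : Fin 3 → ℤ × ℤ := ![(1,0), (0,1), (-1,1)]

/-- An edge is parallel to direction `r` if it has the form `{p, p + dvec r}`. -/
def parallelTo (r : Fin 3) (e : Sym2 (ℤ × ℤ)) : Prop := ∃ p : ℤ × ℤ, e = s(p, p + dvec r)

/-!
Fix thresholds `θ r` and call the edge `{p, p + dvec r}` long iff its level, the index of the strip
between adjacent lattice lines that contains it, is below `θ r`. Around a node of level `ℓ` in
direction `r`, both the spokes and the rim contain exactly one direction-`r` edge of level `ℓ` and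
one of level `ℓ - 1`, so every such state is still. The `60°` rotation of the hexagon permutes the
directions together with their levels, so in every direction the number of long edges is the same
function `N θ` of the threshold; it grows from `0` to `T = 3n² - 5n + 2 = (n - 1)(3n - 2)` in steps
of at most `2n - 2`, the size of one strip. Taking the last `θ` with `N θ ≤ α T` leaves an error
below `(2n - 2) / T = 2 / (3n - 2) ≤ 1 / n`.
-/

open Finset

/-- The edges `{p, p + dvec r}` with a given `level r p` fill one strip between adjacent lattice
lines. -/
def level : Fin 3 → ℤ × ℤ → ℤ := ![fun p => p.1, fun p => p.1 + p.2, fun p => p.2]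

lemma mk_add_dvec_eq_mk_add_dvec_iff {a b : ℤ × ℤ} {r r' : Fin 3} :
    s(a, a + dvec r) = s(b, b + dvec r') ↔ r = r' ∧ a = b := by
  obtain ⟨a₁, a₂⟩ := a
  obtain ⟨b₁, b₂⟩ := b
  fin_cases r <;> fin_cases r' <;> simp [dvec] <;> omega

noncomputable def stripeState (σ : ℝ) (θ : Fin 3 → ℤ) (e : Sym2 (ℤ × ℤ)) : ℝ :=
  if ∃ r a, e = s(a, a + dvec r) ∧ level r a < θ r then σ else 0

lemma stripeState_mk_add_dvec (σ : ℝ) (θ : Fin 3 → ℤ) (r : Fin 3) (a : ℤ × ℤ) :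
    stripeState σ θ s(a, a + dvec r) = if level r a < θ r then σ else 0 := by
  simp only [stripeState, mk_add_dvec_eq_mk_add_dvec_iff]
  simp

lemma hexEq_of_eq_level {κ : Sym2 (ℤ × ℤ) → ℝ} (g : Fin 3 → ℤ → ℝ)
    (hκ : ∀ r a, κ s(a, a + dvec r) = g r (level r a)) (p : ℤ × ℤ) : hexEq κ p := by
  have fwd : ∀ r a b, a + dvec r = b → κ s(a, b) = g r (level r a) := by
    rintro r a _ rfl; exact hκ r a
  have bwd : ∀ r a b, a + dvec r = b → κ s(b, a) = g r (level r a) := by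
    rintro r a _ rfl; rw [Sym2.eq_swap]; exact hκ r a
  unfold hexEq
  rw [fwd 0 p, bwd 0 (p - (1, 0)), fwd 1 p, bwd 1 (p - (0, 1)), fwd 2 p, bwd 2 (p - (-1, 1)),
    fwd 2 (p + (1, 0)), bwd 0 (p + (-1, 1)), bwd 1 (p - (1, 0)), bwd 2 (p - (0, 1)),
    fwd 0 (p - (0, 1)), fwd 1 (p + (1, -1))]
  · simp only [level, Matrix.cons_val_zero, Matrix.cons_val_one, Matrix.cons_val_two,
      Matrix.head_cons, Matrix.tail_cons, Prod.fst_add, Prod.snd_add, Prod.fst_sub, Prod.snd_sub]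
    ring_nf
  all_goals ext <;> simp [dvec] <;> ring

lemma stillState_stripeState (n : ℤ) (σ : ℝ) (θ : Fin 3 → ℤ) :
    StillState n σ (stripeState σ θ) := by
  refine ⟨fun e _ => ?_, fun p _ => ?_⟩
  · unfold stripeState
    split_ifs <;> simp
  · exact hexEq_of_eq_level (fun r ℓ => if ℓ < θ r then σ else 0)
      (stripeState_mk_add_dvec σ θ) p

lemma mem_hexNodes_of_mk_mem_hexEdges {n : ℤ} {a b : ℤ × ℤ} (h : s(a, b) ∈ hexEdges n) :
    a ∈ hexNodes n ∧ b ∈ hexNodes n := by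
  obtain ⟨⟨p, d⟩, hpd, he⟩ := mem_image.1 h
  simp only [mem_filter, mem_product] at hpd
  rcases Sym2.eq_iff.1 he with ⟨rfl, rfl⟩ | ⟨rfl, rfl⟩
  exacts [⟨hpd.1.1, hpd.2⟩, ⟨hpd.2, hpd.1.1⟩]

lemma dvec_mem_hexDirs (r : Fin 3) : dvec r ∈ hexDirs := by
  fin_cases r <;> simp [dvec, hexDirs]

noncomputable def edgeBases (n : ℤ) (r : Fin 3) : Finset (ℤ × ℤ) :=
  (hexNodes n).filter (fun p => p + dvec r ∈ hexNodes n)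

lemma card_filter_stripeState_eq {σ : ℝ} (hσ : σ ≠ 0) (n : ℤ) (θ : Fin 3 → ℤ) (r : Fin 3) :
    #((hexEdges n).filter (fun e => parallelTo r e ∧ stripeState σ θ e = σ)) =
      #((edgeBases n r).filter (fun p => level r p < θ r)) := by
  symm
  refine card_bij (fun p _ => s(p, p + dvec r)) (fun p hp => ?_) (fun p _ q _ h => ?_) ?_
  · simp only [edgeBases, mem_filter] at hp ⊢
    refine ⟨mem_image.2 ⟨(p, dvec r), ?_, rfl⟩, ⟨p, rfl⟩,
      by simp [stripeState_mk_add_dvec, hp.2]⟩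
    simp only [mem_filter, mem_product]
    exact ⟨⟨hp.1.1, dvec_mem_hexDirs r⟩, hp.1.2⟩
  · exact (mk_add_dvec_eq_mk_add_dvec_iff.1 h).2
  · rintro e he
    simp only [mem_filter] at he
    obtain ⟨he, ⟨q, rfl⟩, hlong⟩ := he
    refine ⟨q, ?_, rfl⟩
    rw [stripeState_mk_add_dvec] at hlong
    split_ifs at hlong with hq
    · exact mem_filter.2 ⟨mem_filter.2 (mem_hexNodes_of_mk_mem_hexEdges he), hq⟩
    · exact absurd hlong.symm hσ

/-- Rotation of the triangular lattice by `60°`. -/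
def hexRot : ℤ × ℤ ≃+ ℤ × ℤ where
  toFun p := (p.1 + p.2, -p.1)
  invFun p := (-p.2, p.1 + p.2)
  left_inv p := by ext <;> simp
  right_inv p := by ext <;> simp
  map_add' p q := by ext <;> simp <;> ring

lemma hexRot_mem_hexNodes {n : ℤ} {p : ℤ × ℤ} : hexRot p ∈ hexNodes n ↔ p ∈ hexNodes n := by
  simp only [hexRot, AddEquiv.coe_mk, Equiv.coe_fn_mk, mem_hexNodes, abs_neg,
    add_neg_cancel_comm]
  tauto

lemma card_filter_level_eq_of_hexRot {n θ : ℤ} {r r' : Fin 3}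
    (hd : hexRot (dvec r') = dvec r) (hl : ∀ p, level r (hexRot p) = level r' p) :
    #((edgeBases n r').filter (fun p => level r' p < θ)) =
      #((edgeBases n r).filter (fun p => level r p < θ)) := by
  refine card_equiv hexRot.toEquiv (fun p => ?_)
  simp only [edgeBases, mem_filter, AddEquiv.toEquiv_eq_coe, AddEquiv.coe_toEquiv, ← hd,
    ← map_add, hexRot_mem_hexNodes, hl]

lemma card_filter_level_eq (n θ : ℤ) (r : Fin 3) :
    #((edgeBases n r).filter (fun p => level r p < θ)) =
      #((edgeBases n 0).filter (fun p => p.1 < θ)) := by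
  have h₁ : #((edgeBases n 1).filter (fun p => level 1 p < θ)) =
      #((edgeBases n 0).filter (fun p => level 0 p < θ)) :=
    card_filter_level_eq_of_hexRot (by rfl) (fun p => by simp [level, hexRot])
  fin_cases r
  · rfl
  · exact h₁
  · exact (card_filter_level_eq_of_hexRot (by rfl) (fun p => by simp [level, hexRot])).trans h₁

lemma mem_edgeBases_zero {n : ℤ} {p : ℤ × ℤ} :
    p ∈ edgeBases n 0 ↔ 1 - n ≤ p.1 ∧ p.1 ≤ n - 2 ∧ 1 - n ≤ p.2 ∧ p.2 ≤ n - 1 ∧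
      1 - n ≤ p.1 + p.2 ∧ p.1 + p.2 ≤ n - 2 := by
  simp only [edgeBases, mem_filter, mem_hexNodes, dvec, abs_le]
  simp only [Matrix.cons_val_zero, Prod.fst_add, Prod.snd_add]
  omega

noncomputable def levelCount (n θ : ℤ) : ℕ := #((edgeBases n 0).filter (fun p => p.1 < θ))

lemma levelCount_one_sub (n : ℤ) : levelCount n (1 - n) = 0 := by
  refine card_eq_zero.2 (filter_eq_empty_iff.2 fun p hp => ?_)
  rw [mem_edgeBases_zero] at hp
  omega

lemma levelCount_sub_one (n : ℤ) : levelCount n (n - 1) = #(edgeBases n 0) :=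
  congrArg card (filter_true_of_mem fun p hp => by rw [mem_edgeBases_zero] at hp; omega)

/-- Column `x = k ≥ 0` (of length `2n - 2 - k`) and column `x = k + 1 - n < 0` (of length
`n + k`) together fill row `k` of an `(n - 1) × (3n - 2)` rectangle. -/
lemma card_edgeBases_zero {n : ℤ} (hn : 1 ≤ n) :
    (#(edgeBases n 0) : ℤ) = (n - 1) * (3 * n - 2) := by
  have hrect : #(edgeBases n 0) = #(Icc 0 (n - 2) ×ˢ Icc 0 (3 * n - 3)) := by
    refine card_nbij'
      (fun p => if 0 ≤ p.1 then (p.1, p.2 + n - 1) else (p.1 + n - 1, p.2 + 2 * n - 2))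
      (fun q => if q.2 ≤ 2 * n - 3 - q.1 then (q.1, q.2 - n + 1)
        else (q.1 - n + 1, q.2 - 2 * n + 2))
      ?_ ?_ ?_ ?_ <;> intro p hp <;>
      simp only [coe_product, coe_Icc, Set.mem_prod, Set.mem_Icc, mem_coe,
        mem_edgeBases_zero] at hp ⊢ <;>
      split_ifs <;> simp only [Prod.ext_iff, true_and] at * <;> omega
  rw [hrect, card_product, Int.card_Icc, Int.card_Icc, Nat.cast_mul,
    Int.toNat_of_nonneg (by omega), Int.toNat_of_nonneg (by omega)]
  ring

/-- Column `x` of `edgeBases n 0` takes at most the `2n - 2` values `1 - n ≤ y ≤ n - 2` if `0 ≤ x`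
and `2 - n ≤ y ≤ n - 1` if `x < 0`. -/
lemma card_filter_fst_eq_le {n : ℤ} (hn : 1 ≤ n) (x : ℤ) :
    (#((edgeBases n 0).filter (fun p => p.1 = x)) : ℤ) ≤ 2 * n - 2 := by
  have hinj : Set.InjOn (fun p : ℤ × ℤ => if x < 0 then p.2 - 1 else p.2)
      ((edgeBases n 0).filter (fun p => p.1 = x)) := by
    intro p hp q hq h
    simp only [mem_coe, mem_filter, mem_edgeBases_zero] at hp hq h
    ext <;> split_ifs at h <;> omega
  have hmaps : Set.MapsTo (fun p : ℤ × ℤ => if x < 0 then p.2 - 1 else p.2)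
      ((edgeBases n 0).filter (fun p => p.1 = x)) (Icc (1 - n) (n - 2)) := by
    intro p hp
    simp only [mem_coe, mem_filter, mem_edgeBases_zero, mem_Icc] at hp ⊢
    split_ifs <;> omega
  have hcard := card_le_card_of_injOn _ hmaps hinj
  rw [Int.card_Icc] at hcard
  omega

lemma levelCount_add_one_le {n : ℤ} (hn : 1 ≤ n) (θ : ℤ) :
    (levelCount n (θ + 1) : ℤ) ≤ levelCount n θ + (2 * n - 2) := by
  have hsplit : (edgeBases n 0).filter (fun p => p.1 < θ + 1) =
      (edgeBases n 0).filter (fun p => p.1 < θ) ∪ (edgeBases n 0).filter (fun p => p.1 = θ) := by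
    rw [← filter_or]
    exact filter_congr fun p _ => by omega
  have hunion := card_union_le ((edgeBases n 0).filter (fun p => p.1 < θ))
    ((edgeBases n 0).filter (fun p => p.1 = θ))
  unfold levelCount
  rw [hsplit]
  linarith [card_filter_fst_eq_le hn θ]

lemma exists_le_lt_add_of_le_add {f : ℕ → ℝ} {D t : ℝ} (hstep : ∀ k, f (k + 1) ≤ f k + D)
    (h₀ : f 0 ≤ t) (hm : ∃ m, t < f m + D) : ∃ k, f k ≤ t ∧ t < f k + D := by
  refine ⟨Nat.find hm, ?_, Nat.find_spec hm⟩
  rcases h : Nat.find hm with _ | k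
  · exact h₀
  · have := Nat.find_min hm (by omega : k < Nat.find hm)
    linarith [hstep k]

lemma abs_sub_div_lt {a N T D c : ℝ} (hT : 0 < T) (hN : N ≤ a * T) (hD : a * T < N + D)
    (hc : D ≤ c * T) : |a - N / T| < c := by
  have hsub : a - N / T = (a * T - N) / T := by field_simp
  rw [hsub, abs_of_nonneg (div_nonneg (by linarith) hT.le), div_lt_iff₀ hT]
  linarith

lemma exists_levelCount_le_lt {n : ℤ} (hn : 2 ≤ n) {a : ℝ} (ha : a ∈ Set.Icc (0 : ℝ) 1) :
    ∃ θ, (levelCount n θ : ℝ) ≤ a * ((n - 1) * (3 * n - 2)) ∧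
      a * ((n - 1) * (3 * n - 2)) < levelCount n θ + (2 * n - 2) := by
  have hn' : (2 : ℝ) ≤ n := by exact_mod_cast hn
  let f : ℕ → ℝ := fun k => levelCount n (1 - n + k)
  have hstep : ∀ k, f (k + 1) ≤ f k + (2 * n - 2) := fun k => by
    have := levelCount_add_one_le (n := n) (by omega) (1 - n + k)
    simp only [f, Nat.cast_succ, ← add_assoc]
    exact_mod_cast this
  have htop : f (2 * n - 2).toNat = (n - 1) * (3 * n - 2) := by
    simp only [f, Int.toNat_of_nonneg (by omega : (0 : ℤ) ≤ 2 * n - 2),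
      show 1 - n + (2 * n - 2) = n - 1 by ring, levelCount_sub_one]
    rw [← Int.cast_natCast, card_edgeBases_zero (by omega)]
    push_cast
    ring
  have hT : (0 : ℝ) ≤ (n - 1) * (3 * n - 2) := by nlinarith
  obtain ⟨k, hk⟩ := exists_le_lt_add_of_le_add hstep
    (by simpa [f, levelCount_one_sub] using mul_nonneg ha.1 hT)
    ⟨_, by rw [htop]; nlinarith [ha.2]⟩
  exact ⟨1 - n + k, hk⟩

/-- for every `n ≥ 3` and target concentrations `α ∈ [0,1]³` there is a still
state of the hexagonal array of side `n` whose concentration of long edges in each lattice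
direction `r` — the number of long edges parallel to direction `r` divided by
`3n² - 5n + 2` (the number of edges parallel to direction `r`) — is within `1/n` of `α r`. -/
theorem still_state_with_prescribed_concentrations (σ : ℝ) (hσ : 0 < σ)
    (n : ℤ) (hn : 3 ≤ n) (α : Fin 3 → ℝ) (hα : ∀ r, α r ∈ Set.Icc (0 : ℝ) 1) :
    ∃ κ : Sym2 (ℤ × ℤ) → ℝ, StillState n σ κ ∧
      ∀ r : Fin 3,
        |α r - (((hexEdges n).filter (fun e => parallelTo r e ∧ κ e = σ)).card : ℝ) /
            (3 * (n : ℝ) ^ 2 - 5 * n + 2)| < 1 / (n : ℝ) := by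
  have hn' : (3 : ℝ) ≤ n := by exact_mod_cast hn
  rw [show 3 * (n : ℝ) ^ 2 - 5 * n + 2 = (n - 1) * (3 * n - 2) by ring]
  choose θ hθ using fun r => exists_levelCount_le_lt (n := n) (by omega) (hα r)
  refine ⟨stripeState σ θ, stillState_stripeState n σ θ, fun r => ?_⟩
  rw [card_filter_stripeState_eq hσ.ne', card_filter_level_eq]
  refine abs_sub_div_lt (by nlinarith) (hθ r).1 (hθ r).2 ?_
  rw [div_mul_eq_mul_div, one_mul, le_div_iff₀ (by linarith)]
  nlinarith
end
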